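/- Monotone limits of edge weights exist: let R be a resistance metric on a countably infinite set V and (V_n) a finite exhaustion of V; let G_n = (V_n, c_n) be the unique finite connected weighted graph with effective resistance R restricted to V_n. Then for all x, y ∈ V the sequence c_n(x,y) is eventually monotonically decreasing, hence lim_{n→∞} c_n(x,y) exists in [0,∞); and the sequence (c_n)_x = Σ_{y ∈ V_n} c_n(x,y) is eventually monotonically increasing, hence lim_{n→∞} (c_n)_x exists in (0,∞]. -/

import Mathlib

/-! Eliminating a vertex `w` by the star-mesh transform
`c'(a, b) = c(a, b) + c(a, w) c(w, b) / deg w` preserves the effective resistance between the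
remaining vertices (a potential that is harmonic at `w` restricts to a potential of the reduced
network); it can only increase edge weights and only decrease degrees. Conversely, the effective
resistance determines the weights: by reciprocity and superposition the potentials `φₓ` with
`L φₓ = δₓ - δₒ` are `(R(x, o) + R(·, o) - R(x, ·)) / 2`, and they span all functions modulo
constants, so `R` determines the Laplacian. Hence `G_m` arises from `G_n` by eliminating the
vertices of `V_n \ V_m` one at a time, which gives both monotonicities, and monotone sequences
converge. -/

noncomputable def deg {W : Type*} [Fintype W] (c : W → W → ℝ) (x : W) : ℝ := ∑ y, c x y

def IsWeight {W : Type*} (c : W → W → ℝ) : Prop :=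
  (∀ x y, 0 ≤ c x y) ∧ (∀ x y, c x y = c y x) ∧ (∀ x, c x x = 0)

def Conn {W : Type*} (c : W → W → ℝ) : Prop :=
  ∀ x y, Relation.ReflTransGen (fun a b => 0 < c a b) x y

noncomputable def lap {W : Type*} [Fintype W] (c : W → W → ℝ) (φ : W → ℝ) (x : W) : ℝ :=
  φ x - ∑ y, (c x y / deg c x) * φ y

def IsDirichlet {W : Type*} [Fintype W] [DecidableEq W] (c : W → W → ℝ) (x y : W)
    (φ : W → ℝ) : Prop :=
  (∀ z, lap c φ z =
      (if z = x then 1 / deg c x else 0) - (if z = y then 1 / deg c y else 0)) ∧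
  φ y = 0

def IsEffRes {W : Type*} [Fintype W] [DecidableEq W] (c : W → W → ℝ) (R : W → W → ℝ) : Prop :=
  (∀ x, R x x = 0) ∧ ∀ x y, x ≠ y → ∃ φ, IsDirichlet c x y φ ∧ φ x = R x y

section Laplacian

variable {W : Type*} [Fintype W] {c : W → W → ℝ}

theorem deg_pos_of_ne (hw : IsWeight c) (hc : Conn c) {x y : W} (hxy : x ≠ y) :
    0 < deg c x := by
  obtain rfl | ⟨b, hxb, -⟩ := (hc x y).cases_head
  · exact absurd rfl hxy
  · exact hxb.trans_le (Finset.single_le_sum (fun z _ => hw.1 x z) (Finset.mem_univ b))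

theorem deg_nonneg (hw : IsWeight c) (x : W) : 0 ≤ deg c x :=
  Finset.sum_nonneg fun y _ => hw.1 x y

theorem deg_pos [Nontrivial W] (hw : IsWeight c) (hc : Conn c) (x : W) : 0 < deg c x :=
  let ⟨_, hy⟩ := exists_ne x
  deg_pos_of_ne hw hc hy.symm

variable (c) in
def combLap : (W → ℝ) →ₗ[ℝ] W → ℝ where
  toFun φ x := ∑ y, c x y * (φ x - φ y)
  map_add' φ ψ := by
    ext x
    simp only [Pi.add_apply, ← Finset.sum_add_distrib]
    exact Finset.sum_congr rfl fun _ _ => by ring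
  map_smul' a φ := by
    ext x
    simp only [Pi.smul_apply, smul_eq_mul, RingHom.id_apply, Finset.mul_sum]
    exact Finset.sum_congr rfl fun _ _ => by ring

theorem combLap_apply (φ : W → ℝ) (x : W) : combLap c φ x = ∑ y, c x y * (φ x - φ y) := rfl

theorem lap_eq_combLap_div (φ : W → ℝ) {x : W} (hx : deg c x ≠ 0) :
    lap c φ x = combLap c φ x / deg c x := by
  have hcancel : ∀ y, c x y / deg c x * φ y * deg c x = c x y * φ y := fun y => by
    field_simp
  rw [lap, combLap_apply, eq_div_iff hx, sub_mul, Finset.sum_mul]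
  simp only [hcancel, mul_sub, Finset.sum_sub_distrib, ← Finset.sum_mul]
  rw [deg, mul_comm]

theorem combLap_eq_zero_of_forall_eq {φ : W → ℝ} (h : ∀ a b, φ a = φ b) : combLap c φ = 0 := by
  ext x
  simp [combLap_apply, h _ x]

variable [DecidableEq W]

def dipole (x y : W) : W → ℝ := Pi.single x 1 - Pi.single y 1

theorem isDirichlet_iff (hdeg : ∀ z, deg c z ≠ 0) {x y : W} {φ : W → ℝ} :
    IsDirichlet c x y φ ↔ combLap c φ = dipole x y ∧ φ y = 0 := by
  have hrhs : ∀ z, ((if z = x then 1 / deg c x else 0) - if z = y then 1 / deg c y else 0) =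
      dipole x y z / deg c z := by
    intro z
    by_cases hx : z = x <;> by_cases hy : z = y <;> simp_all [dipole, neg_div]
  simp only [IsDirichlet, hrhs, lap_eq_combLap_div _ (hdeg _), div_left_inj' (hdeg _), funext_iff]

theorem combLap_single {a b : W} (hab : a ≠ b) : combLap c (Pi.single b 1) a = -c a b := by
  simp [combLap_apply, Pi.single_apply, hab]

end Laplacian

section Energy

variable {W : Type*} [Fintype W] {c : W → W → ℝ}

def energy (c : W → W → ℝ) (φ ψ : W → ℝ) : ℝ := ∑ x, combLap c φ x * ψ x

theorem two_mul_energy (hsymm : ∀ a b, c a b = c b a) (φ ψ : W → ℝ) :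
    2 * energy c φ ψ = ∑ x, ∑ y, c x y * ((φ x - φ y) * (ψ x - ψ y)) := by
  have h₁ : energy c φ ψ = ∑ x, ∑ y, c x y * ((φ x - φ y) * ψ x) := by
    simp only [energy, combLap_apply, Finset.sum_mul, mul_assoc]
  have h₂ : energy c φ ψ = ∑ x, ∑ y, c x y * ((φ x - φ y) * -ψ y) := by
    rw [h₁, Finset.sum_comm]
    exact Finset.sum_congr rfl fun x _ => Finset.sum_congr rfl fun y _ => by rw [hsymm]; ring
  rw [two_mul]
  nth_rw 1 [h₁]
  rw [h₂, ← Finset.sum_add_distrib]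
  refine Finset.sum_congr rfl fun x _ => ?_
  rw [← Finset.sum_add_distrib]
  exact Finset.sum_congr rfl fun y _ => by ring

theorem energy_comm (hsymm : ∀ a b, c a b = c b a) (φ ψ : W → ℝ) :
    energy c φ ψ = energy c ψ φ := by
  have h : ∑ x, ∑ y, c x y * ((φ x - φ y) * (ψ x - ψ y)) =
      ∑ x, ∑ y, c x y * ((ψ x - ψ y) * (φ x - φ y)) :=
    Finset.sum_congr rfl fun x _ => Finset.sum_congr rfl fun y _ => by ring
  linarith [two_mul_energy hsymm φ ψ, two_mul_energy hsymm ψ φ]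

theorem sum_combLap_eq_zero (hsymm : ∀ a b, c a b = c b a) (φ : W → ℝ) :
    ∑ x, combLap c φ x = 0 :=
  calc ∑ x, combLap c φ x = energy c φ 1 := by simp [energy]
    _ = energy c 1 φ := energy_comm hsymm φ 1
    _ = 0 := by simp [energy, combLap_eq_zero_of_forall_eq (c := c) (φ := 1) fun _ _ => rfl]

theorem forall_eq_of_combLap_eq_zero (hw : IsWeight c) (hc : Conn c) {φ : W → ℝ}
    (h : combLap c φ = 0) (a b : W) : φ a = φ b := by
  have hsq : ∑ x, ∑ y, c x y * ((φ x - φ y) * (φ x - φ y)) = 0 := by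
    rw [← two_mul_energy hw.2.1, energy, h]
    simp
  have hterm_nonneg : ∀ x y, 0 ≤ c x y * ((φ x - φ y) * (φ x - φ y)) := fun x y =>
    mul_nonneg (hw.1 x y) (mul_self_nonneg _)
  have hedge : ∀ x y, 0 < c x y → φ x = φ y := by
    intro x y hxy
    have hrow := congrFun ((Fintype.sum_eq_zero_iff_of_nonneg fun x =>
      Finset.sum_nonneg fun y _ => hterm_nonneg x y).1 hsq) x
    have hxy0 := congrFun ((Fintype.sum_eq_zero_iff_of_nonneg (hterm_nonneg x)).1 hrow) y
    have := mul_self_eq_zero.1 ((mul_eq_zero.1 hxy0).resolve_left hxy.ne')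
    linarith
  induction hc a b with
  | refl => rfl
  | tail _ hbc ih => exact ih.trans (hedge _ _ hbc)

variable [DecidableEq W]

theorem energy_eq_of_combLap_eq_dipole {x y : W} {φ : W → ℝ} (h : combLap c φ = dipole x y)
    (ψ : W → ℝ) : energy c φ ψ = ψ x - ψ y := by
  simp [energy, h, dipole, sub_mul, Finset.sum_sub_distrib, Pi.single_apply]

end Energy

section Network

variable {W : Type*} [Fintype W] [DecidableEq W] {c R : W → W → ℝ}

structure IsNetwork (c R : W → W → ℝ) : Prop where
  isWeight : IsWeight c
  conn : Conn c
  isEffRes : IsEffRes c R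

theorem IsNetwork.exists_potential (h : IsNetwork c R) {x y : W} (hxy : x ≠ y) :
    ∃ φ, combLap c φ = dipole x y ∧ φ y = 0 ∧ φ x = R x y := by
  have : Nontrivial W := ⟨x, y, hxy⟩
  obtain ⟨φ, hφ, hφx⟩ := h.isEffRes.2 x y hxy
  rw [isDirichlet_iff fun z => (deg_pos h.isWeight h.conn z).ne'] at hφ
  exact ⟨φ, hφ.1, hφ.2, hφx⟩

theorem IsNetwork.potential_eq (h : IsNetwork c R) {x o : W} (hxo : x ≠ o) {φ : W → ℝ}
    (hφ : combLap c φ = dipole x o) (hφo : φ o = 0) (hφx : φ x = R x o) (z : W) :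
    φ z = (R x o + R z o - R x z) / 2 := by
  rcases eq_or_ne z o with rfl | hzo
  · rw [hφo, h.isEffRes.1]; ring
  rcases eq_or_ne z x with rfl | hzx
  · rw [hφx, h.isEffRes.1]; ring
  obtain ⟨χ, hχ, hχo, hχz⟩ := h.exists_potential hzo
  obtain ⟨ψ, hψ, hψz, hψx⟩ := h.exists_potential hzx.symm
  have hrecip : φ z = χ x := by
    have h₁ := energy_eq_of_combLap_eq_dipole hχ φ
    have h₂ := energy_eq_of_combLap_eq_dipole hφ χ
    rw [energy_comm h.isWeight.2.1] at h₁
    linarith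
  have hsuper : combLap c (φ - χ - ψ) = 0 := by
    rw [map_sub, map_sub, hφ, hχ, hψ, dipole, dipole, dipole]
    abel
  have := forall_eq_of_combLap_eq_zero h.isWeight h.conn hsuper x z
  simp only [Pi.sub_apply] at this
  linarith

theorem IsNetwork.exists_common_potential {c₁ c₂ : W → W → ℝ} (h₁ : IsNetwork c₁ R)
    (h₂ : IsNetwork c₂ R) (x o : W) :
    ∃ φ, combLap c₁ φ = dipole x o ∧ combLap c₂ φ = dipole x o := by
  rcases eq_or_ne x o with rfl | hxo
  · exact ⟨0, by simp [dipole]⟩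
  obtain ⟨φ₁, hφ₁, hφ₁o, hφ₁x⟩ := h₁.exists_potential hxo
  obtain ⟨φ₂, hφ₂, hφ₂o, hφ₂x⟩ := h₂.exists_potential hxo
  have : φ₁ = φ₂ := funext fun z => by
    rw [h₁.potential_eq hxo hφ₁ hφ₁o hφ₁x, h₂.potential_eq hxo hφ₂ hφ₂o hφ₂x]
  exact ⟨φ₁, hφ₁, this ▸ hφ₂⟩

end Network

section Uniqueness

variable {W : Type*} [Fintype W] [DecidableEq W] {c₁ c₂ R : W → W → ℝ}

theorem sum_smul_dipole (a : W → ℝ) (o : W) :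
    ∑ x, a x • dipole x o = a - (∑ x, a x) • Pi.single o 1 := by
  ext z
  simp [dipole, Finset.sum_apply, Pi.single_apply, mul_sub, Finset.sum_sub_distrib]

theorem combLap_eq_of_exists_common_potential (hw₁ : IsWeight c₁) (hc₁ : Conn c₁) (o : W)
    (hpot : ∀ x, ∃ φ, combLap c₁ φ = dipole x o ∧ combLap c₂ φ = dipole x o) :
    combLap c₁ = combLap c₂ := by
  choose φ hφ₁ hφ₂ using hpot
  refine LinearMap.ext fun g => ?_
  have hG : ∀ c : W → W → ℝ, (∀ x, combLap c (φ x) = dipole x o) →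
      combLap c (∑ x, combLap c₁ g x • φ x) = combLap c₁ g := by
    intro c hc
    simp only [map_sum, map_smul, hc, sum_smul_dipole, sum_combLap_eq_zero hw₁.2.1, zero_smul,
      sub_zero]
  have hconst := forall_eq_of_combLap_eq_zero hw₁ hc₁
    (φ := ∑ x, combLap c₁ g x • φ x - g) (by rw [map_sub, hG c₁ hφ₁, sub_self])
  rw [← hG c₂ hφ₂, ← sub_eq_zero, ← map_sub]
  exact combLap_eq_zero_of_forall_eq hconst

theorem IsNetwork.unique (h₁ : IsNetwork c₁ R) (h₂ : IsNetwork c₂ R) : c₁ = c₂ := by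
  ext a b
  rcases eq_or_ne a b with rfl | hab
  · rw [h₁.isWeight.2.2, h₂.isWeight.2.2]
  have hL := combLap_eq_of_exists_common_potential h₁.isWeight h₁.conn a
    (h₁.exists_common_potential h₂ · a)
  simpa [combLap_single hab] using congrArg (fun L => L (Pi.single b 1) a) hL

end Uniqueness

section StarMesh

variable {W : Type*} [Fintype W] [DecidableEq W] {c R : W → W → ℝ} {w : W}

theorem sum_subtype_ne (f : W → ℝ) (w : W) :
    ∑ b : {z // z ≠ w}, f b = ∑ b, f b - f w :=
  eq_sub_of_add_eq' (Fintype.sum_eq_add_sum_subtype_ne f w).symm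

-- The loop of weight `c a w ^ 2 / deg c w` that the transform would create at `a` is dropped.
noncomputable def starMesh (c : W → W → ℝ) (w : W) (a b : {z // z ≠ w}) : ℝ :=
  if a = b then 0 else c a b + c a w * c w b / deg c w

theorem starMesh_of_ne {a b : {z // z ≠ w}} (hab : a ≠ b) :
    starMesh c w a b = c a b + c a w * c w b / deg c w :=
  if_neg hab

theorem le_starMesh (hw : IsWeight c) (a b : {z // z ≠ w}) : c a b ≤ starMesh c w a b := by
  rcases eq_or_ne a b with rfl | hab
  · rw [starMesh, if_pos rfl, hw.2.2]
  · rw [starMesh_of_ne hab]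
    exact le_add_of_nonneg_right
      (div_nonneg (mul_nonneg (hw.1 _ _) (hw.1 _ _)) (deg_nonneg hw w))

theorem starMesh_pos (hw : IsWeight c) (hD : 0 < deg c w) {a b : {z // z ≠ w}} (hab : a ≠ b)
    (haw : 0 < c a w) (hwb : 0 < c w b) : 0 < starMesh c w a b := by
  rw [starMesh_of_ne hab]
  exact add_pos_of_nonneg_of_pos (hw.1 _ _) (div_pos (mul_pos haw hwb) hD)

theorem isWeight_starMesh (hw : IsWeight c) (w : W) : IsWeight (starMesh c w) := by
  refine ⟨fun a b => (hw.1 a b).trans (le_starMesh hw a b), fun a b => ?_, fun a => if_pos rfl⟩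
  rcases eq_or_ne a b with rfl | hab
  · rfl
  · rw [starMesh_of_ne hab, starMesh_of_ne hab.symm, hw.2.1 a b, hw.2.1 a w, hw.2.1 w b]
    ring

theorem deg_starMesh_le (hw : IsWeight c) (a : {z // z ≠ w}) :
    deg (starMesh c w) a ≤ deg c a := by
  have hterm : ∀ b, starMesh c w a b ≤ c a b + c a w / deg c w * c w b := by
    intro b
    rcases eq_or_ne a b with rfl | hab
    · rw [starMesh, if_pos rfl]
      exact add_nonneg (hw.1 _ _)
        (mul_nonneg (div_nonneg (hw.1 _ _) (deg_nonneg hw w)) (hw.1 _ _))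
    · rw [starMesh_of_ne hab, mul_div_right_comm]
  have hcancel : c a w / deg c w * deg c w ≤ c a w := by
    rcases (deg_nonneg hw w).eq_or_lt with hD | hD
    · rw [← hD, mul_zero]
      exact hw.1 _ _
    · rw [div_mul_cancel₀ _ hD.ne']
  calc deg (starMesh c w) a ≤ ∑ b : {z // z ≠ w}, (c a b + c a w / deg c w * c w b) :=
        Finset.sum_le_sum fun b _ => hterm b
    _ = deg c a - c a w + c a w / deg c w * deg c w := by
        rw [Finset.sum_add_distrib, ← Finset.mul_sum, sum_subtype_ne (c a), sum_subtype_ne (c w),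
          hw.2.2 w, sub_zero]
        rfl
    _ ≤ deg c a := by linarith

theorem conn_starMesh (hw : IsWeight c) (hc : Conn c) (hD : 0 < deg c w) :
    Conn (starMesh c w) := by
  intro a b
  set Reach := Relation.ReflTransGen (fun s t => 0 < starMesh c w s t) a
  have hreach : ∀ s t, Reach s → (s = t ∨ 0 < starMesh c w s t) → Reach t := by
    rintro s t hs (rfl | hst)
    exacts [hs, hs.tail hst]
  -- `w` is treated as reached as soon as one of its neighbours is.
  let P : W → Prop := fun v => ∃ s, Reach s ∧ (s.1 = v ∨ (v = w ∧ 0 < c s w))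
  have hP : ∀ u v, P u → 0 < c u v → P v := by
    rintro u v ⟨s, hs, rfl | ⟨huw, hsw⟩⟩ huv
    · by_cases hv : v = w
      · exact ⟨s, hs, Or.inr ⟨hv, hv ▸ huv⟩⟩
      refine ⟨⟨v, hv⟩, hreach s _ hs ?_, Or.inl rfl⟩
      exact or_iff_not_imp_left.2 fun _ => huv.trans_le (le_starMesh hw s ⟨v, hv⟩)
    · rw [huw] at huv
      have hv : v ≠ w := by
        rintro rfl
        exact (hw.2.2 _ ▸ huv).false
      refine ⟨⟨v, hv⟩, hreach s _ hs ?_, Or.inl rfl⟩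
      exact or_iff_not_imp_left.2 fun hsv => starMesh_pos hw hD hsv hsw huv
  have hPb : ∀ v, Relation.ReflTransGen (fun x y => 0 < c x y) a v → P v := by
    intro v hv
    induction hv with
    | refl => exact ⟨a, .refl, Or.inl rfl⟩
    | tail _ huv ih => exact hP _ _ ih huv
  obtain ⟨s, hs, hsb | ⟨hbw, -⟩⟩ := hPb b (hc a b)
  · exact Subtype.ext hsb ▸ hs
  · exact absurd hbw b.2

theorem combLap_starMesh (hw : IsWeight c) (hD : deg c w ≠ 0) {φ : W → ℝ}
    (hφw : combLap c φ w = 0) (a : {z // z ≠ w}) :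
    combLap (starMesh c w) (fun z => φ z) a = combLap c φ a := by
  have hterm : ∀ b : {z // z ≠ w}, starMesh c w a b * (φ a - φ b) =
      c a b * (φ a - φ b) + c a w / deg c w * (c w b * (φ a - φ b)) := by
    intro b
    rcases eq_or_ne a b with rfl | hab
    · simp
    · rw [starMesh_of_ne hab]
      ring
  have hrow : ∑ b, c w b * (φ a - φ b) = deg c w * (φ a - φ w) := by
    rw [combLap_apply] at hφw
    calc ∑ b, c w b * (φ a - φ b) = ∑ b, (c w b * (φ a - φ w) + c w b * (φ w - φ b)) :=
          Finset.sum_congr rfl fun b _ => by ring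
      _ = deg c w * (φ a - φ w) := by
          rw [Finset.sum_add_distrib, ← Finset.sum_mul, hφw, add_zero]
          rfl
  rw [combLap_apply, combLap_apply, Finset.sum_congr rfl fun b _ => hterm b,
    Finset.sum_add_distrib, ← Finset.mul_sum, sum_subtype_ne (fun b => c a b * (φ a - φ b)),
    sum_subtype_ne (fun b => c w b * (φ a - φ b)), hrow, hw.2.2 w]
  field_simp
  ring

theorem IsNetwork.starMesh [Nontrivial W] (h : IsNetwork c R) (w : W) :
    IsNetwork (starMesh c w) (fun a b => R a b) := by
  have hD := deg_pos h.isWeight h.conn w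
  have hw' := isWeight_starMesh h.isWeight w
  have hc' := conn_starMesh h.isWeight h.conn hD
  refine ⟨hw', hc', ⟨fun x => h.isEffRes.1 x, fun x y hxy => ?_⟩⟩
  have : Nontrivial {z // z ≠ w} := ⟨x, y, hxy⟩
  obtain ⟨φ, hφ, hφy, hφx⟩ := h.exists_potential (Subtype.coe_injective.ne hxy)
  have hφw : combLap c φ w = 0 := by
    simp [hφ, dipole, x.2.symm, y.2.symm]
  refine ⟨fun z => φ z, ?_, hφx⟩
  rw [isDirichlet_iff fun z => (deg_pos hw' hc' z).ne']
  refine ⟨funext fun a => ?_, hφy⟩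
  rw [combLap_starMesh h.isWeight hD.ne' hφw, hφ]
  simp [dipole, Pi.single_apply, Subtype.ext_iff]

end StarMesh

section Comparison

variable {A B : Type*} [Fintype A] [DecidableEq A] [Fintype B] [DecidableEq B]

theorem IsNetwork.comp_equiv {c R : B → B → ℝ} (h : IsNetwork c R) (e : A ≃ B) :
    IsNetwork (fun a a' => c (e a) (e a')) (fun a a' => R (e a) (e a')) := by
  have hw : IsWeight fun a a' => c (e a) (e a') :=
    ⟨fun _ _ => h.isWeight.1 _ _, fun _ _ => h.isWeight.2.1 _ _, fun _ => h.isWeight.2.2 _⟩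
  have hc : Conn fun a a' => c (e a) (e a') := fun a a' => by
    simpa [Function.onFun] using (h.conn (e a) (e a')).lift
      (p := fun a a' => 0 < c (e a) (e a')) e.symm fun b b' hbb' => by
        simpa [Function.onFun] using hbb'
  refine ⟨hw, hc, fun a => h.isEffRes.1 _, fun x y hxy => ?_⟩
  have : Nontrivial A := ⟨x, y, hxy⟩
  obtain ⟨φ, hφ, hφy, hφx⟩ := h.exists_potential (e.injective.ne hxy)
  refine ⟨φ ∘ e, ?_, hφx⟩
  rw [isDirichlet_iff fun a => (deg_pos hw hc a).ne']
  refine ⟨funext fun a => ?_, hφy⟩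
  have hcomp : combLap (fun a a' => c (e a) (e a')) (φ ∘ e) a = combLap c φ (e a) :=
    e.sum_comp fun b => c (e a) b * (φ (e a) - φ b)
  simp [hcomp, hφ, dipole, Pi.single_apply]

theorem IsNetwork.weight_le_and_deg_le_of_embedding {cA : A → A → ℝ} {cB RB : B → B → ℝ}
    (f : A ↪ B) (hA : IsNetwork cA fun a a' => RB (f a) (f a')) (hB : IsNetwork cB RB) :
    (∀ a a', cB (f a) (f a') ≤ cA a a') ∧ ∀ a, deg cA a ≤ deg cB (f a) := by
  obtain ⟨n, hn⟩ := Nat.exists_eq_add_of_le (Fintype.card_le_of_embedding f)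
  induction n generalizing B with
  | zero =>
    let e := Equiv.ofBijective f
      ((Fintype.bijective_iff_injective_and_card f).2 ⟨f.injective, by simp [hn]⟩)
    have hcA : cA = fun a a' => cB (e a) (e a') := hA.unique (hB.comp_equiv e)
    subst hcA
    exact ⟨fun _ _ => le_rfl, fun a => (e.sum_comp (cB (e a))).le⟩
  | succ n ih =>
    rcases isEmpty_or_nonempty A with hAe | ⟨⟨a₀⟩⟩
    · exact ⟨fun a => isEmptyElim a, fun a => isEmptyElim a⟩
    obtain ⟨w, hw⟩ : ∃ w, ∀ a, f a ≠ w := by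
      by_contra! hsurj
      have := Fintype.card_le_of_surjective f hsurj
      omega
    have : Nontrivial B := ⟨f a₀, w, hw a₀⟩
    let f' : A ↪ {z // z ≠ w} := ⟨fun a => ⟨f a, hw a⟩, fun a a' h => f.injective congr($h.1)⟩
    have hcard : Fintype.card {z // z ≠ w} = Fintype.card A + n := by
      simp [Fintype.card_subtype_compl, hn]
    obtain ⟨ih₁, ih₂⟩ := ih f' hA (hB.starMesh w) hcard
    exact ⟨fun a a' => (le_starMesh hB.isWeight (f' a) (f' a')).trans (ih₁ a a'),
      fun a => (ih₂ a).trans (deg_starMesh_le hB.isWeight (f' a))⟩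

end Comparison

open Filter ENNReal

theorem exists_nonneg_tendsto_of_eventually_antitone {u : ℕ → ℝ} {N : ℕ}
    (hu : ∀ m n, N ≤ m → m ≤ n → u n ≤ u m) (h0 : ∀ n, N ≤ n → 0 ≤ u n) :
    ∃ L, 0 ≤ L ∧ Tendsto u atTop (nhds L) := by
  have hanti : Antitone fun k => u (k + N) := fun k l hkl =>
    hu _ _ (Nat.le_add_left N k) (Nat.add_le_add_right hkl N)
  have hbdd : BddBelow (Set.range fun k => u (k + N)) :=
    ⟨0, Set.forall_mem_range.2 fun k => h0 _ (Nat.le_add_left N k)⟩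
  exact ⟨⨅ k, u (k + N), le_ciInf fun k => h0 _ (Nat.le_add_left N k),
    (tendsto_add_atTop_iff_nat N).1 (tendsto_atTop_ciInf hanti hbdd)⟩

theorem exists_pos_tendsto_of_eventually_monotone {u : ℕ → ℝ≥0∞} {N : ℕ}
    (hu : ∀ m n, N ≤ m → m ≤ n → u m ≤ u n) (hpos : 0 < u N) :
    ∃ L, 0 < L ∧ Tendsto u atTop (nhds L) := by
  have hmono : Monotone fun k => u (k + N) := fun k l hkl =>
    hu _ _ (Nat.le_add_left N k) (Nat.add_le_add_right hkl N)
  exact ⟨⨆ k, u (k + N), hpos.trans_le (le_iSup_of_le 0 (by rw [zero_add])),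
    (tendsto_add_atTop_iff_nat N).1 (tendsto_atTop_iSup hmono)⟩

theorem stmt18_general {V : Type*} [DecidableEq V] [Infinite V]
    (R : V → V → ℝ)
    (Vseq : ℕ → Finset V) (hmono : ∀ n, Vseq n ⊆ Vseq (n + 1))
    (hexh : ∀ v : V, ∃ n, v ∈ Vseq n)
    (c : ℕ → V → V → ℝ)
    (hw : ∀ n, IsWeight fun a b : ↥(Vseq n) => c n a.1 b.1)
    (hconn : ∀ n, Conn fun a b : ↥(Vseq n) => c n a.1 b.1)
    (heff : ∀ n, IsEffRes (fun a b : ↥(Vseq n) => c n a.1 b.1)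
      (fun a b : ↥(Vseq n) => R a.1 b.1)) :
    ∀ x y : V,
      (∃ N : ℕ, ∀ m n : ℕ, N ≤ m → m ≤ n → c n x y ≤ c m x y) ∧
      (∃ L : ℝ, 0 ≤ L ∧ Tendsto (fun n => c n x y) atTop (nhds L)) ∧
      (∃ N : ℕ, ∀ m n : ℕ, N ≤ m → m ≤ n →
        (∑ z : ↥(Vseq m), c m x z.1) ≤ ∑ z : ↥(Vseq n), c n x z.1) ∧
      (∃ L : ℝ≥0∞, 0 < L ∧
        Tendsto (fun n => ENNReal.ofReal (∑ z : ↥(Vseq n), c n x z.1))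
          atTop (nhds L)) := by
  have hsub : ∀ {m n}, m ≤ n → Vseq m ⊆ Vseq n := fun h => monotone_nat_of_le_succ hmono h
  have hcompare : ∀ {m n}, m ≤ n →
      (∀ a b : ↥(Vseq m), c n a b ≤ c m a b) ∧
      ∀ a : ↥(Vseq m), (∑ z : ↥(Vseq m), c m a z.1) ≤ ∑ z : ↥(Vseq n), c n a z.1 :=
    fun hmn => IsNetwork.weight_le_and_deg_le_of_embedding
      (Subtype.impEmbedding _ _ fun _ h => hsub hmn h) ⟨hw _, hconn _, heff _⟩
      ⟨hw _, hconn _, heff _⟩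
  have hev : ∀ v, ∀ᶠ n in atTop, v ∈ Vseq n := fun v =>
    let ⟨N, hN⟩ := hexh v
    eventually_atTop.2 ⟨N, fun _ h => hsub h hN⟩
  intro x y
  obtain ⟨z, hzx⟩ := exists_ne x
  obtain ⟨N, hN⟩ := eventually_atTop.1 ((hev x).and ((hev y).and (hev z)))
  have hanti : ∀ m n, N ≤ m → m ≤ n → c n x y ≤ c m x y := fun m n hm hmn =>
    (hcompare hmn).1 ⟨x, (hN m hm).1⟩ ⟨y, (hN m hm).2.1⟩
  have hdeg : ∀ m n, N ≤ m → m ≤ n →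
      (∑ z : ↥(Vseq m), c m x z.1) ≤ ∑ z : ↥(Vseq n), c n x z.1 := fun m n hm hmn =>
    (hcompare hmn).2 ⟨x, (hN m hm).1⟩
  have hdeg_pos : 0 < ∑ z : ↥(Vseq N), c N x z.1 :=
    deg_pos_of_ne (hw N) (hconn N) (x := ⟨x, (hN N le_rfl).1⟩) (y := ⟨z, (hN N le_rfl).2.2⟩)
      fun h => hzx congr($h.1).symm
  refine ⟨⟨N, hanti⟩, exists_nonneg_tendsto_of_eventually_antitone hanti fun n hn =>
      (hw n).1 ⟨x, (hN n hn).1⟩ ⟨y, (hN n hn).2.1⟩, ⟨N, hdeg⟩,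
    exists_pos_tendsto_of_eventually_monotone
      (fun m n hm hmn => ENNReal.ofReal_le_ofReal (hdeg m n hm hmn))
      (ENNReal.ofReal_pos.2 hdeg_pos)⟩

theorem stmt18 {V : Type*} [DecidableEq V] [Infinite V] [Countable V]
    (R : V → V → ℝ) (hR : ∀ x y, 0 ≤ R x y)
    (Vseq : ℕ → Finset V) (hmono : ∀ n, Vseq n ⊆ Vseq (n + 1))
    (hexh : ∀ v : V, ∃ n, v ∈ Vseq n)
    (c : ℕ → V → V → ℝ)
    (hw : ∀ n, IsWeight fun a b : ↥(Vseq n) => c n a.1 b.1)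
    (hconn : ∀ n, Conn fun a b : ↥(Vseq n) => c n a.1 b.1)
    (heff : ∀ n, IsEffRes (fun a b : ↥(Vseq n) => c n a.1 b.1)
      (fun a b : ↥(Vseq n) => R a.1 b.1)) :
    ∀ x y : V,
      (∃ N : ℕ, ∀ m n : ℕ, N ≤ m → m ≤ n → c n x y ≤ c m x y) ∧
      (∃ L : ℝ, 0 ≤ L ∧ Tendsto (fun n => c n x y) atTop (nhds L)) ∧
      (∃ N : ℕ, ∀ m n : ℕ, N ≤ m → m ≤ n →
        (∑ z : ↥(Vseq m), c m x z.1) ≤ ∑ z : ↥(Vseq n), c n x z.1) ∧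
      (∃ L : ℝ≥0∞, 0 < L ∧
        Tendsto (fun n => ENNReal.ofReal (∑ z : ↥(Vseq n), c n x z.1))
          atTop (nhds L)) :=
  stmt18_general R Vseq hmono hexh c hw hconn heff
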